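/- arXiv:1011.5931 — 5 statements merged into one kernel-verified Lean document; each statement's English description precedes it below -/
import Mathlib

section
/- Let A and B be groups, x = (b, f) ∈ A wr B with b of infinite order, and y = (c, g) ∈ A wr B. Suppose z = (d, h) conjugates x to y, i.e., z x z⁻¹ = y. Then d b d⁻¹ = c and for every t ∈ B, ∏_{j∈ℤ} f(t b^j) = ∏_{j∈ℤ} g(t b^j d⁻¹), where A is assumed abelian so the products are well-defined. -/
/-- The mulSupport of a translated function is finite if the original's is. -/
lemma shift_fin {A B : Type} [Group A] [Group B] {f : B → A}
    (hf : (Function.mulSupport f).Finite) (c : B) :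
    (Function.mulSupport fun x => f (x * c)).Finite := by
  have h : (Function.mulSupport fun x => f (x * c)) ⊆
      (fun x : B => x * c) ⁻¹' Function.mulSupport f := fun x hx => hx
  exact (hf.preimage (mul_left_injective c).injOn).subset h

/-- The restricted wreath product `A wr B`: pairs `(b, f)` with `f : B → A`
finitely supported, with multiplication `(b,f)(c,g) = (bc, f^c g)`, `f^c x = f (x c⁻¹)`. -/
@[ext] structure Wr (A B : Type) [Group A] [Group B] where
  base : B
  fn : B → A
  fin : (Function.mulSupport fn).Finite

namespace Wr

variable {A B : Type} [Group A] [Group B]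

instance : Mul (Wr A B) :=
  ⟨fun x y => ⟨x.base * y.base, fun t => x.fn (t * y.base⁻¹) * y.fn t,
    ((shift_fin x.fin y.base⁻¹).union y.fin).subset (Function.mulSupport_mul _ _)⟩⟩

instance : One (Wr A B) :=
  ⟨⟨1, fun _ => 1, Set.finite_empty.subset (by intro t ht; simp [Function.mem_mulSupport] at ht)⟩⟩

instance : Inv (Wr A B) :=
  ⟨fun x => ⟨x.base⁻¹, fun t => (x.fn (t * x.base))⁻¹,
    (shift_fin x.fin x.base).subset (by intro t ht; simpa [Function.mem_mulSupport] using ht)⟩⟩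

@[simp] lemma mul_base (x y : Wr A B) : (x * y).base = x.base * y.base := rfl
@[simp] lemma mul_fn (x y : Wr A B) (t : B) :
    (x * y).fn t = x.fn (t * y.base⁻¹) * y.fn t := rfl
@[simp] lemma one_base : (1 : Wr A B).base = 1 := rfl
@[simp] lemma one_fn (t : B) : (1 : Wr A B).fn t = 1 := rfl
@[simp] lemma inv_base (x : Wr A B) : (x⁻¹).base = x.base⁻¹ := rfl
@[simp] lemma inv_fn (x : Wr A B) (t : B) : (x⁻¹).fn t = (x.fn (t * x.base))⁻¹ := rfl

instance : Group (Wr A B) where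
  mul_assoc a b c := by
    refine Wr.ext ?_ ?_
    · simp [mul_assoc]
    · funext t; simp [mul_assoc, mul_inv_rev]
  one_mul a := by
    refine Wr.ext ?_ ?_
    · simp
    · funext t; simp
  mul_one a := by
    refine Wr.ext ?_ ?_
    · simp
    · funext t; simp
  inv_mul_cancel a := by
    refine Wr.ext ?_ ?_
    · simp
    · funext t; simp

end Wr

/-!
Comparing coordinates in `z x z⁻¹ = y` gives `c = d b d⁻¹` and
`g s = h (s d b⁻¹) * f (s d) / h (s d)`. Along the coset `t⟨b⟩d⁻¹` this says that
`j ↦ g (t bʲ d⁻¹)` is `j ↦ f (t bʲ)` times the coboundary of `j ↦ h (t bʲ)`. As `b` has infinite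
order, `j ↦ t bʲ` is injective, so all three are finitely supported on `ℤ`, and the finite
product of a coboundary telescopes to `1`.
-/

open Function

lemma hasFiniteMulSupport_mul_zpow {M B : Type*} [One M] [Group B] {f : B → M} {b : B}
    (hf : HasFiniteMulSupport f) (hb : ¬IsOfFinOrder b) (t : B) :
    HasFiniteMulSupport fun j : ℤ => f (t * b ^ j) :=
  hf.fun_comp_of_injective <|
    (mul_right_injective t).comp (injective_zpow_iff_not_isOfFinOrder.2 hb)

lemma finprod_mul_sub_one_div {A : Type*} [CommGroup A] {u v : ℤ → A}
    (hu : HasFiniteMulSupport u) (hv : HasFiniteMulSupport v) :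
    ∏ᶠ j, u (j - 1) * v j / u j = ∏ᶠ j, v j := by
  have hu' : HasFiniteMulSupport fun j => u (j - 1) := hu.fun_comp_of_injective sub_left_injective
  have hshift : ∏ᶠ j, u (j - 1) = ∏ᶠ j, u j := finprod_comp_equiv (Equiv.subRight 1)
  rw [finprod_div_distrib (hu'.fun_mul hv) hu, finprod_mul_distrib hu' hv, hshift,
    mul_div_cancel_left]

lemma Wr.fn_eq_of_conj_eq {A B : Type} [Group A] [Group B] {z x y : Wr A B}
    (hconj : z * x * z⁻¹ = y) (t : B) :
    y.fn t = z.fn (t * z.base * x.base⁻¹) * x.fn (t * z.base) / z.fn (t * z.base) := by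
  subst hconj
  simp [div_eq_mul_inv]

/-- If `z = (d,h)` conjugates `x = (b,f)` (with `b` of infinite order) to `y = (c,g)`
in `A wr B` with `A` abelian, then `d b d⁻¹ = c` and for every `t ∈ B`,
`∏_{j∈ℤ} f(t bʲ) = ∏_{j∈ℤ} g(t bʲ d⁻¹)`. -/
theorem conjugator_infinite_order_pi_eq (A B : Type) [CommGroup A] [Group B]
    (b c d : B) (f g h : B → A)
    (hf : (Function.mulSupport f).Finite) (hg : (Function.mulSupport g).Finite)
    (hh : (Function.mulSupport h).Finite)
    (hb : ¬ IsOfFinOrder b)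
    (hconj : (⟨d, h, hh⟩ : Wr A B) * ⟨b, f, hf⟩ * (⟨d, h, hh⟩ : Wr A B)⁻¹ = ⟨c, g, hg⟩) :
    d * b * d⁻¹ = c ∧
      ∀ t : B, (∏ᶠ j : ℤ, f (t * b ^ j)) = ∏ᶠ j : ℤ, g (t * b ^ j * d⁻¹) := by
  refine ⟨congrArg Wr.base hconj, fun t => ?_⟩
  have hg_eq (j : ℤ) :
      g (t * b ^ j * d⁻¹) = h (t * b ^ (j - 1)) * f (t * b ^ j) / h (t * b ^ j) :=
    (Wr.fn_eq_of_conj_eq hconj _).trans <| by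
      simp only [mul_assoc, inv_mul_cancel, mul_one, zpow_sub_one]
  rw [finprod_congr hg_eq, finprod_mul_sub_one_div (hasFiniteMulSupport_mul_zpow hh hb t)
    (hasFiniteMulSupport_mul_zpow hf hb t)]
end

section
/- Let A and B be groups with A abelian, and let x = (b, f), y = (c, g) ∈ A wr B with b of infinite order. Then x and y are conjugate in A wr B if and only if there exists d ∈ B with d b d⁻¹ = c (i.e., db = cd) such that for every t ∈ B, ∏_{j∈ℤ} g(t b^j d⁻¹) = ∏_{j∈ℤ} f(t b^j). -/
/-!
Write a conjugator as `z = (d, h)`. Then `z x z⁻¹ = y` says that `d b d⁻¹ = c` and that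
`K t = f t / g (t d⁻¹)` is the coboundary `h t / h (t b⁻¹)` of a finitely supported `h`.
As `b` has infinite order, each orbit `t ⟨b⟩` is a copy of `ℤ`, and a finitely supported function
on `ℤ` is such a coboundary exactly when its total product is trivial, the primitive `h` being
the prefix product `∏_{j ≤ 0} K (t bʲ)`.
-/

open Function Set

section ZPowOrbit

variable {B M : Type} [Group B]

lemma finite_mulSupport_zpow_orbit [One M] {b : B} (hb : Injective fun j : ℤ => b ^ j)
    {K : B → M} (hK : (mulSupport K).Finite) (t : B) :
    (mulSupport fun j : ℤ => K (t * b ^ j)).Finite :=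
  hK.preimage fun _ _ _ _ hij => hb (mul_left_cancel hij)

lemma finprod_zpow_orbit_mul_inv [CommMonoid M] (K : B → M) (t b : B) :
    ∏ᶠ j : ℤ, K (t * b ^ j * b⁻¹) = ∏ᶠ j : ℤ, K (t * b ^ j) := by
  simp_rw [mul_assoc, ← zpow_sub_one]
  exact finprod_comp_equiv (Equiv.subRight 1) (f := fun j => K (t * b ^ j))

noncomputable def orbitPrefixProd [CommMonoid M] (b : B) (K : B → M) (t : B) : M :=
  ∏ᶠ j ∈ Iic (0 : ℤ), K (t * b ^ j)

variable [CommMonoid M] {b : B} {K : B → M}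

lemma orbitPrefixProd_mul_inv (t : B) :
    orbitPrefixProd b K (t * b⁻¹) = ∏ᶠ j ∈ Iio (0 : ℤ), K (t * b ^ j) := by
  have shift (j : ℤ) : t * b⁻¹ * b ^ j = t * b ^ (j - 1) := by
    rw [mul_assoc, ← zpow_neg_one, ← zpow_add, neg_add_eq_sub]
  simp only [orbitPrefixProd, shift]
  rw [← finprod_mem_image (f := fun j : ℤ => K (t * b ^ j)) (g := fun j : ℤ => j - 1)
    sub_left_injective.injOn, image_sub_const_Iic, Iic_sub_one_eq_Iio]

lemma orbitPrefixProd_eq_mul (hb : Injective fun j : ℤ => b ^ j) (hK : (mulSupport K).Finite)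
    (t : B) : orbitPrefixProd b K t = orbitPrefixProd b K (t * b⁻¹) * K t := by
  rw [orbitPrefixProd_mul_inv, orbitPrefixProd, ← Iio_insert,
    finprod_mem_insert' _ self_notMem_Iio
      ((finite_mulSupport_zpow_orbit hb hK t).inter_of_right _),
    zpow_zero, mul_one, mul_comm]

lemma finite_mulSupport_orbitPrefixProd (hb : Injective fun j : ℤ => b ^ j)
    (hK : (mulSupport K).Finite) (hprod : ∀ t, ∏ᶠ j : ℤ, K (t * b ^ j) = 1) :
    (mulSupport (orbitPrefixProd b K)).Finite := by
  -- A nontrivial prefix product at `t` needs `K ≠ 1` at some `t bʲ` with `j ≤ 0`, and, since the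
  -- whole orbit product is `1`, at some `t bʲ'` with `j' > 0`: `t` lies on an orbit segment
  -- `s b^[0, n)` between two points `s`, `s bⁿ` of the support of `K`.
  refine (hK.biUnion fun s _ => (finite_mulSupport_zpow_orbit hb hK s).biUnion
    fun n _ => (finite_Ico 0 n).image fun m => s * b ^ m).subset fun t ht => ?_
  obtain ⟨j, hj0, hj⟩ : ∃ j : ℤ, j ≤ 0 ∧ K (t * b ^ j) ≠ 1 := by
    by_contra! h
    exact ht (finprod_mem_of_eqOn_one fun j hj => h j hj)
  obtain ⟨j', hj'0, hj'⟩ : ∃ j' : ℤ, 0 < j' ∧ K (t * b ^ j') ≠ 1 := by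
    by_contra! h
    refine ht ((finprod_mem_inter_mulSupport_eq' _ _ univ fun j hj => ?_).trans
      ((finprod_mem_univ _).trans (hprod t)))
    simp only [mem_Iic, mem_univ, iff_true]
    by_contra! hj0
    exact hj (h j hj0)
  simp only [mem_iUnion, mem_image, mem_Ico]
  refine ⟨t * b ^ j, hj, j' - j, ?_, -j, ⟨by omega, by omega⟩, ?_⟩
  · rwa [mem_mulSupport, mul_assoc, ← zpow_add, add_sub_cancel]
  · rw [mul_assoc, ← zpow_add, add_neg_cancel, zpow_zero, mul_one]

end ZPowOrbit

section Coboundary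

variable {B G : Type} [Group B] [CommGroup G] {b : B} {K : B → G}

theorem forall_finprod_zpow_orbit_eq_one_iff (hb : Injective fun j : ℤ => b ^ j)
    (hK : (mulSupport K).Finite) :
    (∀ t, ∏ᶠ j : ℤ, K (t * b ^ j) = 1) ↔
      ∃ h : B → G, (mulSupport h).Finite ∧ ∀ t, K t = h t / h (t * b⁻¹) := by
  constructor
  · intro hprod
    refine ⟨orbitPrefixProd b K, finite_mulSupport_orbitPrefixProd hb hK hprod, fun t => ?_⟩
    rw [orbitPrefixProd_eq_mul hb hK, mul_div_cancel_left]
  · rintro ⟨h, hh, hKh⟩ t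
    obtain rfl : K = fun t => h t / h (t * b⁻¹) := funext hKh
    rw [finprod_div_distrib (finite_mulSupport_zpow_orbit hb hh t)
      (finite_mulSupport_zpow_orbit hb (shift_fin hh b⁻¹) t), finprod_zpow_orbit_mul_inv,
      div_self']

end Coboundary

namespace Wr

variable {A B : Type} [CommGroup A] [Group B]

lemma mul_mul_inv_eq_iff (z x y : Wr A B) :
    z * x * z⁻¹ = y ↔ z.base * x.base * z.base⁻¹ = y.base ∧
      ∀ t, x.fn t / y.fn (t * z.base⁻¹) = z.fn t / z.fn (t * x.base⁻¹) := by
  rw [Wr.ext_iff, funext_iff, ← (Equiv.mulRight z.base⁻¹).forall_congr_right]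
  refine and_congr Iff.rfl (forall_congr' fun t => ?_)
  simp only [mul_fn, inv_fn, inv_base, inv_inv, Equiv.coe_mulRight, inv_mul_cancel_right]
  rw [mul_inv_eq_iff_eq_mul, div_eq_div_iff_mul_eq_mul, mul_comm (z.fn _), mul_comm (y.fn _)]

end Wr

/-- Matthews' conjugacy criterion for `A wr B` with `A` abelian and `b` of infinite
order: `x = (b,f)` and `y = (c,g)` are conjugate iff there is `d ∈ B` with
`d b d⁻¹ = c` such that for every `t ∈ B`, `∏_{j∈ℤ} g(t bʲ d⁻¹) = ∏_{j∈ℤ} f(t bʲ)`. -/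
theorem conjugacy_criterion_abelian_infinite_order (A B : Type) [CommGroup A] [Group B]
    (b c : B) (f g : B → A)
    (hf : (Function.mulSupport f).Finite) (hg : (Function.mulSupport g).Finite)
    (hb : ¬ IsOfFinOrder b) :
    (∃ z : Wr A B, z * (⟨b, f, hf⟩ : Wr A B) * z⁻¹ = ⟨c, g, hg⟩) ↔
      ∃ d : B, d * b * d⁻¹ = c ∧
        ∀ t : B, (∏ᶠ j : ℤ, g (t * b ^ j * d⁻¹)) = ∏ᶠ j : ℤ, f (t * b ^ j) := by
  have hb_inj := injective_zpow_iff_not_isOfFinOrder.mpr hb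
  have hK (d : B) : (mulSupport fun t => f t / g (t * d⁻¹)).Finite :=
    (hf.union (shift_fin hg d⁻¹)).subset (mulSupport_div _ _)
  have finprod_orbit_div (d t : B) :
      ∏ᶠ j : ℤ, f (t * b ^ j) / g (t * b ^ j * d⁻¹) =
        (∏ᶠ j : ℤ, f (t * b ^ j)) / ∏ᶠ j : ℤ, g (t * b ^ j * d⁻¹) :=
    finprod_div_distrib (finite_mulSupport_zpow_orbit hb_inj hf t)
      (finite_mulSupport_zpow_orbit hb_inj (shift_fin hg d⁻¹) t)
  constructor
  · rintro ⟨z, hz⟩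
    obtain ⟨hbase, hfn⟩ := (Wr.mul_mul_inv_eq_iff _ _ _).1 hz
    refine ⟨z.base, hbase, fun t => ?_⟩
    have := (forall_finprod_zpow_orbit_eq_one_iff hb_inj (hK z.base)).2 ⟨z.fn, z.fin, hfn⟩ t
    rwa [finprod_orbit_div, div_eq_one, eq_comm] at this
  · rintro ⟨d, hd, hprod⟩
    obtain ⟨h, hh, hfn⟩ := (forall_finprod_zpow_orbit_eq_one_iff hb_inj (hK d)).1 fun t => by
      rw [finprod_orbit_div, hprod, div_self']
    exact ⟨⟨d, h, hh⟩, (Wr.mul_mul_inv_eq_iff _ _ _).2 ⟨hd, hfn⟩⟩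
end

section
/- Let F be a free group with basis x₁,…,x_r and N a normal subgroup of F. The map φ sending x_i to the matrix with entries (μ(x_i), u_i; 0, 1) extends to a group homomorphism from F/N′ to M(F/N) which is injective (the Magnus embedding). -/
/-- The Magnus matrix group `M(Q)` (for `Q = F/N`): matrices `((g, u), (0, 1))` with
`g ∈ Q` and `u` in the free `ℤ(Q)`-module of rank `r`, under matrix multiplication
`(g,u)·(g',u') = (g g', g·u' + u)`. -/
@[ext] structure Magnus (r : ℕ) (Q : Type) [Group Q] where
  g : Q
  u : Fin r → MonoidAlgebra ℤ Q

namespace Magnus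

variable {r : ℕ} {Q : Type} [Group Q]

noncomputable instance : Mul (Magnus r Q) :=
  ⟨fun x y => ⟨x.g * y.g, fun i => MonoidAlgebra.single x.g (1 : ℤ) * y.u i + x.u i⟩⟩

noncomputable instance : One (Magnus r Q) := ⟨⟨1, 0⟩⟩

noncomputable instance : Inv (Magnus r Q) :=
  ⟨fun x => ⟨x.g⁻¹, fun i => -(MonoidAlgebra.single x.g⁻¹ (1 : ℤ) * x.u i)⟩⟩

@[simp] lemma mul_g (x y : Magnus r Q) : (x * y).g = x.g * y.g := rfl
@[simp] lemma mul_u (x y : Magnus r Q) (i : Fin r) :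
    (x * y).u i = MonoidAlgebra.single x.g (1 : ℤ) * y.u i + x.u i := rfl
@[simp] lemma one_g : (1 : Magnus r Q).g = 1 := rfl
@[simp] lemma one_u (i : Fin r) : (1 : Magnus r Q).u i = 0 := rfl
@[simp] lemma inv_g (x : Magnus r Q) : (x⁻¹).g = x.g⁻¹ := rfl
@[simp] lemma inv_u (x : Magnus r Q) (i : Fin r) :
    (x⁻¹).u i = -(MonoidAlgebra.single x.g⁻¹ (1 : ℤ) * x.u i) := rfl

noncomputable instance : Group (Magnus r Q) where
  mul_assoc x y z := by
    refine Magnus.ext ?_ ?_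
    · simp [mul_assoc]
    · funext i
      simp [mul_add, add_assoc, ← mul_assoc, MonoidAlgebra.single_mul_single]
  one_mul x := by
    refine Magnus.ext ?_ ?_
    · simp
    · funext i; simp [MonoidAlgebra.one_def.symm]
  mul_one x := by
    refine Magnus.ext ?_ ?_
    · simp
    · funext i; simp
  inv_mul_cancel x := by
    refine Magnus.ext ?_ ?_
    · simp
    · funext i; simp [← mul_assoc, MonoidAlgebra.single_mul_single]

end Magnus

/-!
The homomorphism `ψ : F → M(F/N)`, `xᵢ ↦ (μ xᵢ, uᵢ)`, kills `N' = [N, N]` because elements of `N`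
are sent to the abelian subgroup `{(1, u)}`. For the converse, fix a transversal `s` of `N` in `F`
and consider the `N/N'`-valued cocycle `c(w)(q) = s(q) w s(q w)⁻¹`. Comparing the cocycle identity
with the multiplication in `M(F/N)` shows that `c(w)` is obtained from the `u`-coordinates of `ψ w`
acting on the functions `c(xⱼ)` by right translation. So if `ψ w = 1`, then `w ∈ N` and
`c(w)(1) = s(1) w s(1)⁻¹` lies in `N'`, whence `w ∈ N'`.
-/

namespace Magnus

variable {r : ℕ} {Q : Type} [Group Q]

def gHom : Magnus r Q →* Q where
  toFun := Magnus.g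
  map_one' := rfl
  map_mul' _ _ := rfl

lemma commute_of_g_eq_one {a b : Magnus r Q} (ha : a.g = 1) (hb : b.g = 1) : Commute a b := by
  refine Magnus.ext ?_ ?_
  · simp [ha, hb]
  · funext i
    simp [ha, hb, MonoidAlgebra.one_def.symm, add_comm]

end Magnus

namespace MonoidAlgebra

variable {Q A : Type*} [Group Q] [AddCommGroup A]

/-- `translateSum f v q = ∑ g, v g • f (q * g)`: the right-translation action of `ℤ[Q]` on
`Q → A`, applied to `f`. -/
noncomputable def translateSum (f : Q → A) : MonoidAlgebra ℤ Q →+ (Q → A) :=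
  (Finsupp.liftAddHom fun g => (smulAddHom ℤ (Q → A)).flip fun q => f (q * g)).comp
    coeffAddEquiv.toAddMonoidHom

lemma translateSum_single (f : Q → A) (g : Q) (n : ℤ) (q : Q) :
    translateSum f (single g n) q = n • f (q * g) := by
  simp [translateSum]

lemma translateSum_single_one_mul (f : Q → A) (g : Q) (v : MonoidAlgebra ℤ Q) (q : Q) :
    translateSum f (single g 1 * v) q = translateSum f v (q * g) := by
  induction v using MonoidAlgebra.induction_linear with
  | zero => simp
  | add v w hv hw => simp only [mul_add, map_add, Pi.add_apply, hv, hw]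
  | single h n =>
    rw [single_mul_single, one_mul, translateSum_single, translateSum_single, mul_assoc]

end MonoidAlgebra

section TransversalCocycle

variable {G : Type*} [Group G] (N : Subgroup G) [N.Normal]

lemma out_mul_mul_out_inv_mem (q : G ⧸ N) (w : G) : q.out * w * (q * w).out⁻¹ ∈ N := by
  rw [← QuotientGroup.eq_one_iff]
  simp

noncomputable def transversalCocycle (w : G) (q : G ⧸ N) : Additive (Abelianization N) :=
  .ofMul (Abelianization.of ⟨q.out * w * (q * w).out⁻¹, out_mul_mul_out_inv_mem N q w⟩)

lemma transversalCocycle_mul (x y : G) (q : G ⧸ N) :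
    transversalCocycle N (x * y) q = transversalCocycle N x q + transversalCocycle N y (q * x) := by
  rw [transversalCocycle, transversalCocycle, transversalCocycle, ← ofMul_mul, ← map_mul]
  congr 2
  ext
  simp only [Subgroup.coe_mul, QuotientGroup.mk_mul, mul_assoc]
  group

lemma transversalCocycle_eq_zero_iff (w : G) (q : G ⧸ N) :
    transversalCocycle N w q = 0 ↔ q.out * w * (q * w).out⁻¹ ∈ ⁅N, N⁆ := by
  rw [transversalCocycle, ofMul_eq_zero, ← MonoidHom.mem_ker, Abelianization.ker_of,
    ← N.map_subtype_commutator]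
  exact (Subgroup.mem_map_iff_mem N.subtype_injective).symm

lemma transversalCocycle_one (q : G ⧸ N) : transversalCocycle N 1 q = 0 :=
  (transversalCocycle_eq_zero_iff N 1 q).2 (by simp [one_mem])

lemma transversalCocycle_inv (x : G) (q : G ⧸ N) :
    transversalCocycle N x⁻¹ q = -transversalCocycle N x (q * x⁻¹) := by
  have h := transversalCocycle_mul N x⁻¹ x q
  rw [inv_mul_cancel, transversalCocycle_one] at h
  exact eq_neg_of_add_eq_zero_left h.symm

lemma mem_commutator_of_transversalCocycle_eq_zero {w : G} (hw : w ∈ N)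
    (h : transversalCocycle N w 1 = 0) : w ∈ ⁅N, N⁆ := by
  rw [transversalCocycle_eq_zero_iff, one_mul, (QuotientGroup.eq_one_iff w).2 hw] at h
  convert (Subgroup.commutator_normal N N).conj_mem _ h (1 : G ⧸ N).out⁻¹ using 1
  group

end TransversalCocycle

section MagnusHom

variable {r : ℕ} (N : Subgroup (FreeGroup (Fin r))) [N.Normal]

noncomputable def magnusHom : FreeGroup (Fin r) →* Magnus r (FreeGroup (Fin r) ⧸ N) :=
  FreeGroup.lift fun i => ⟨QuotientGroup.mk (FreeGroup.of i), Pi.single i 1⟩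

lemma magnusHom_of (i : Fin r) :
    magnusHom N (FreeGroup.of i) = ⟨QuotientGroup.mk (FreeGroup.of i), Pi.single i 1⟩ :=
  FreeGroup.lift_apply_of

lemma magnusHom_g (w : FreeGroup (Fin r)) : (magnusHom N w).g = w := by
  have h : Magnus.gHom.comp (magnusHom N) = QuotientGroup.mk' N :=
    FreeGroup.ext_hom _ _ fun i => by simp [magnusHom, Magnus.gHom]
  exact DFunLike.congr_fun h w

lemma commutator_le_ker_magnusHom : ⁅N, N⁆ ≤ (magnusHom N).ker := by
  rw [Subgroup.commutator_le]
  intro a ha b hb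
  have hg : ∀ x ∈ N, (magnusHom N x).g = 1 := fun x hx => by
    rwa [magnusHom_g, QuotientGroup.eq_one_iff]
  rw [MonoidHom.mem_ker, map_commutatorElement, commutatorElement_eq_one_iff_commute]
  exact Magnus.commute_of_g_eq_one (hg a ha) (hg b hb)

/-- The `u`-coordinates of `magnusHom N w` are the Fox derivatives of `w` mapped to `ℤ[F/N]`;
this is the chain rule expressing the cocycle of `w` through those of the generators. -/
lemma transversalCocycle_eq_sum_translateSum (w : FreeGroup (Fin r)) :
    transversalCocycle N w =
      ∑ j, MonoidAlgebra.translateSum (transversalCocycle N (FreeGroup.of j))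
        ((magnusHom N w).u j) := by
  induction w with
  | C1 =>
    funext q
    simp [transversalCocycle_one]
  | of i =>
    funext q
    rw [Finset.sum_apply,
      Finset.sum_eq_single i (fun j _ hj => by simp [magnusHom_of, hj]) (by simp)]
    simp [magnusHom_of, MonoidAlgebra.one_def, MonoidAlgebra.translateSum_single]
  | inv_of i ih =>
    funext q
    simp [transversalCocycle_inv, ih, Finset.sum_apply, MonoidAlgebra.translateSum_single_one_mul,
      magnusHom_g]
  | mul x y ihx ihy =>
    funext q
    simp [transversalCocycle_mul, ihx, ihy, Finset.sum_apply,
      MonoidAlgebra.translateSum_single_one_mul, magnusHom_g, Finset.sum_add_distrib, add_comm]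

lemma ker_magnusHom : (magnusHom N).ker = ⁅N, N⁆ := by
  refine le_antisymm (fun w hw => ?_) (commutator_le_ker_magnusHom N)
  rw [MonoidHom.mem_ker] at hw
  have hwN : w ∈ N := by
    rw [← QuotientGroup.eq_one_iff, ← magnusHom_g, hw, Magnus.one_g]
  refine mem_commutator_of_transversalCocycle_eq_zero N hwN ?_
  rw [transversalCocycle_eq_sum_translateSum, hw]
  simp

end MagnusHom

/-- The Magnus embedding: the map `x_i ↦ ((μ(x_i), u_i), (0,1))` extends to an injective
group homomorphism `φ : F/N' → M(F/N)`, where `N' = [N,N]` and `u_i` is the `i`-th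
basis vector of the free `ℤ(F/N)`-module of rank `r`. -/
theorem magnus_embedding_exists (r : ℕ) (N : Subgroup (FreeGroup (Fin r))) [N.Normal] :
    ∃ φ : (FreeGroup (Fin r) ⧸ (⁅N, N⁆ : Subgroup (FreeGroup (Fin r)))) →*
        Magnus r (FreeGroup (Fin r) ⧸ N),
      Function.Injective φ ∧
      ∀ i : Fin r, φ (QuotientGroup.mk (FreeGroup.of i)) =
        ⟨QuotientGroup.mk (FreeGroup.of i), Pi.single i 1⟩ :=
  ⟨QuotientGroup.lift _ (magnusHom N) (commutator_le_ker_magnusHom N),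
    (QuotientGroup.injective_lift_iff _ _ _).2 (ker_magnusHom N).symm,
    fun i => magnusHom_of N i⟩
end

section
/- Free solvable groups are torsion-free: for every d ≥ 1 and r ≥ 1, the group S_{d,r} = F/F^{(d)} (F free of rank r, F^{(d)} the d-th derived subgroup) has no nontrivial elements of finite order. -/
/-!
Induct on `d`. With `M = F^{(d)}`, the group `F/F^{(d+1)} = F/[M,M]` is an extension of `F/M` by
`M/[M,M]`. By Nielsen–Schreier `M` is free, so `M/[M,M]` is free abelian, hence torsion-free, and
an extension of a torsion-free group by a torsion-free group is torsion-free.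
-/

instance derivedSeries_normal_inst (G : Type) [Group G] (n : ℕ) :
    (derivedSeries G n).Normal := derivedSeries_normal G n

/-- For nonabelian groups this is weaker than `IsMulTorsionFree`, which asks for unique roots. -/
def Monoid.IsTorsionFree (G : Type*) [Monoid G] : Prop :=
  ∀ g : G, IsOfFinOrder g → g = 1

namespace Monoid.IsTorsionFree

variable {G H : Type*}

theorem of_isMulTorsionFree [Monoid G] [IsMulTorsionFree G] : IsTorsionFree G :=
  fun g => (isOfFinOrder_iff_eq_one g).mp

theorem of_injective [Monoid G] [Monoid H] (hH : IsTorsionFree H) (f : G →* H)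
    (hf : Function.Injective f) : IsTorsionFree G :=
  fun g hg => hf (by rw [hH _ (f.isOfFinOrder hg), map_one])

end Monoid.IsTorsionFree

open Monoid

instance Abelianization.isMulTorsionFree_of_isFreeGroup (G : Type*) [Group G] [IsFreeGroup G] :
    IsMulTorsionFree (Abelianization G) :=
  let e : Abelianization G ≃* Multiplicative (IsFreeGroup.Generators G →₀ ℤ) :=
    (IsFreeGroup.toFreeGroup G).abelianizationCongr.trans
      (AddEquiv.toMultiplicativeRight (G := Abelianization (FreeGroup _))
        (FreeAbelianGroup.equivFinsupp _))
  e.injective.isMulTorsionFree e.toMonoidHom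

theorem Subgroup.commutator_subgroupOf_self {G : Type*} [Group G] (M : Subgroup G) :
    ⁅M, M⁆.subgroupOf M = _root_.commutator M := by
  rw [← M.map_subtype_commutator, subgroupOf,
    comap_map_eq_self_of_injective M.subtype_injective]

namespace QuotientGroup

variable {G : Type*} [Group G]

theorem isOfFinOrder_mk_iff {K : Subgroup G} [K.Normal] {g : G} :
    IsOfFinOrder (g : G ⧸ K) ↔ ∃ n, 0 < n ∧ g ^ n ∈ K := by
  simp only [isOfFinOrder_iff_pow_eq_one, ← mk_pow, eq_one_iff]

theorem isTorsionFree_of_le {N M : Subgroup G} [N.Normal] [M.Normal] (hNM : N ≤ M)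
    (hM : IsTorsionFree (G ⧸ M)) (hMN : IsTorsionFree (M ⧸ N.subgroupOf M)) :
    IsTorsionFree (G ⧸ N) := by
  intro x hx
  induction x using QuotientGroup.induction_on with | _ g
  obtain ⟨n, hn, hgn⟩ := isOfFinOrder_mk_iff.mp hx
  have hgM : g ∈ M := (eq_one_iff g).mp (hM _ (isOfFinOrder_mk_iff.mpr ⟨n, hn, hNM hgn⟩))
  have hgN : (⟨g, hgM⟩ : M) ∈ N.subgroupOf M :=
    (eq_one_iff _).mp (hMN _ (isOfFinOrder_mk_iff.mpr ⟨n, hn, hgn⟩))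
  exact (eq_one_iff g).mpr hgN

theorem isTorsionFree_commutator (M : Subgroup G) [M.Normal]
    (hM : IsTorsionFree (G ⧸ M)) (hMab : IsTorsionFree (Abelianization M)) :
    IsTorsionFree (G ⧸ ⁅M, M⁆) :=
  have e := quotientMulEquivOfEq M.commutator_subgroupOf_self
  isTorsionFree_of_le M.commutator_le_self hM (hMab.of_injective e.toMonoidHom e.injective)

end QuotientGroup

theorem IsFreeGroup.isTorsionFree_quotient_derivedSeries (G : Type*) [Group G] [IsFreeGroup G]
    (d : ℕ) : IsTorsionFree (G ⧸ derivedSeries G d) := by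
  induction d with
  | zero =>
    have : Subsingleton (G ⧸ derivedSeries G 0) := by
      rw [derivedSeries_zero]; exact QuotientGroup.subsingleton_quotient_top
    exact fun g _ => Subsingleton.elim g 1
  | succ d ih =>
    exact QuotientGroup.isTorsionFree_commutator (derivedSeries G d) ih
      IsTorsionFree.of_isMulTorsionFree

theorem free_solvable_torsion_free_general (d r : ℕ)
    (x : FreeGroup (Fin r) ⧸ derivedSeries (FreeGroup (Fin r)) d) (hx : x ≠ 1) :
    ¬ IsOfFinOrder x :=
  fun hfin => hx (IsFreeGroup.isTorsionFree_quotient_derivedSeries _ d x hfin)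

/-- Free solvable groups are torsion-free: for `d ≥ 1`, `r ≥ 1`, the free solvable group
`S_{d,r} = F/F^{(d)}` (with `F` free of rank `r` and `F^{(d)}` the `d`-th derived
subgroup) has no nontrivial element of finite order. -/
theorem free_solvable_torsion_free (d r : ℕ) (hd : 1 ≤ d) (hr : 1 ≤ r)
    (x : FreeGroup (Fin r) ⧸ derivedSeries (FreeGroup (Fin r)) d) (hx : x ≠ 1) :
    ¬ IsOfFinOrder x :=
  free_solvable_torsion_free_general d r x hx
end

section
/- Let A, B be groups and x = (b, f) ∈ A wr B where b has finite order N. For t ∈ B define π_t(f) = ∏_{j=0}^{N-1} f(t b^j). If z = (d, h) conjugates x to y = (c, g) in A wr B, then for every t ∈ B, the element π_t^{(d)}(g) := ∏_{j=0}^{N-1} g(t b^j d⁻¹) is conjugate in A to π_t(f). -/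
theorem List.prod_map_range_mul_mul_inv_succ {G : Type*} [Group G] (k a : ℕ → G) (n : ℕ) :
    ((List.range n).map fun j => k j * a j * (k (j + 1))⁻¹).prod =
      k 0 * ((List.range n).map a).prod * (k n)⁻¹ := by
  induction n with
  | zero => simp
  | succ n ih => simp only [List.prod_range_succ, ih]; group

theorem Wr.conj_fn {A B : Type} [Group A] [Group B] (z x : Wr A B) (s : B) :
    (z * x * z⁻¹).fn s =
      z.fn (s * z.base * x.base⁻¹) * x.fn (s * z.base) * (z.fn (s * z.base))⁻¹ := by
  simp [mul_assoc]

theorem conjugator_finite_order_pi_conj_general (A B : Type) [Group A] [Group B] (N : ℕ)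
    (b c d : B) (f g h : B → A)
    (hf : (Function.mulSupport f).Finite) (hg : (Function.mulSupport g).Finite)
    (hh : (Function.mulSupport h).Finite)
    (hN : orderOf b = N)
    (hconj : (⟨d, h, hh⟩ : Wr A B) * ⟨b, f, hf⟩ * (⟨d, h, hh⟩ : Wr A B)⁻¹ = ⟨c, g, hg⟩) :
    ∀ t : B,
      IsConj (((List.range N).map fun j => g (t * b ^ j * d⁻¹)).prod)
        (((List.range N).map fun j => f (t * b ^ j)).prod) := by
  intro t
  have hg_eq (s : B) : g s = h (s * d * b⁻¹) * f (s * d) * (h (s * d))⁻¹ := by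
    change (⟨c, g, hg⟩ : Wr A B).fn s = _
    rw [← hconj, Wr.conj_fn]
  -- `g` along the orbit of `t d⁻¹` is `f` along the orbit of `t`, twisted by the coboundary of `k`.
  set k : ℕ → A := fun j => h (t * b ^ j * b⁻¹)
  have hterm (j : ℕ) : g (t * b ^ j * d⁻¹) = k j * f (t * b ^ j) * (k (j + 1))⁻¹ := by
    simp [hg_eq, k, pow_succ, ← mul_assoc]
  have hperiod : k N = k 0 := by simp [k, ← hN, pow_orderOf_eq_one]
  simp only [hterm, List.prod_map_range_mul_mul_inv_succ, hperiod]
  exact isConj_iff.mpr ⟨(k 0)⁻¹, by group⟩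

/-- Finite-order case of Matthews' criterion (necessity): if `b` has finite order `N`
and `z = (d,h)` conjugates `x = (b,f)` to `y = (c,g)` in `A wr B`, then for every
`t ∈ B` the ordered product `π_t^{(d)}(g) = ∏_{j=0}^{N-1} g(t bʲ d⁻¹)` is conjugate
in `A` to `π_t(f) = ∏_{j=0}^{N-1} f(t bʲ)`. -/
theorem conjugator_finite_order_pi_conj (A B : Type) [Group A] [Group B] (N : ℕ)
    (b c d : B) (f g h : B → A)
    (hf : (Function.mulSupport f).Finite) (hg : (Function.mulSupport g).Finite)
    (hh : (Function.mulSupport h).Finite)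
    (hN : orderOf b = N) (hNpos : 0 < N)
    (hconj : (⟨d, h, hh⟩ : Wr A B) * ⟨b, f, hf⟩ * (⟨d, h, hh⟩ : Wr A B)⁻¹ = ⟨c, g, hg⟩) :
    ∀ t : B,
      IsConj (((List.range N).map fun j => g (t * b ^ j * d⁻¹)).prod)
        (((List.range N).map fun j => f (t * b ^ j)).prod) :=
  conjugator_finite_order_pi_conj_general A B N b c d f g h hf hg hh hN hconj
end
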